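/- Consider the 3×3-block linear system A (Ẋ_c, ω)ᵀ = B with A = k_τ [ [2π I₂, u], [uᵀ, s] ], where u = ∫ r(θ) e_θ^⊥ dθ ∈ ℝ², s = ∫ r(θ)² dθ ∈ ℝ, and r : [0,2π] → [0,∞) continuous, not identically zero, k_τ > 0. Then det A = (2π)k_τ³ (2π s − |u|²) > 0, and hence the system has a unique solution (Ẋ_c, ω), given by ω = Δ^{-1}[ −(k_τ^{-1}F + ∫Ẋ_θ)·u + 2π ∫ r e_θ^⊥·Ẋ_θ ] and 2π Ẋ_c = −ω u + ∫ Ẋ_θ + k_τ^{-1} F, where Δ = 2π s − |u|² and B = (k_τ ∫ Ẋ_θ + F, k_τ ∫ r e_θ^⊥ · Ẋ_θ)ᵀ. -/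

import Mathlib

open Real MeasureTheory Matrix

/-- Euclidean dot product on `ℝ × ℝ`. -/
noncomputable def dot2 (v w : ℝ × ℝ) : ℝ := v.1 * w.1 + v.2 * w.2

private lemma split6 {a b : ℝ} (c2 c3 c4 c5 c6 : ℝ) (f1 f2 f3 f4 f5 f6 : ℝ → ℝ)
    (h1 : Continuous f1) (h2 : Continuous f2) (h3 : Continuous f3)
    (h4 : Continuous f4) (h5 : Continuous f5) (h6 : Continuous f6) :
    (∫ x in a..b, (f1 x + c2*f2 x + c3*f3 x + c4*f4 x + c5*f5 x + c6*f6 x))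
      = (∫ x in a..b, f1 x) + c2*(∫ x in a..b, f2 x) + c3*(∫ x in a..b, f3 x)
        + c4*(∫ x in a..b, f4 x) + c5*(∫ x in a..b, f5 x) + c6*(∫ x in a..b, f6 x) := by
  have i : ∀ {g : ℝ → ℝ}, Continuous g → IntervalIntegrable g volume a b :=
    fun h => h.intervalIntegrable _ _
  rw [intervalIntegral.integral_add (i (by fun_prop)) (i (g := fun x => c6 * f6 x) (continuous_const.mul h6)),
      intervalIntegral.integral_add (i (by fun_prop)) (i (g := fun x => c5 * f5 x) (continuous_const.mul h5)),
      intervalIntegral.integral_add (i (by fun_prop)) (i (g := fun x => c4 * f4 x) (continuous_const.mul h4)),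
      intervalIntegral.integral_add (i (by fun_prop)) (i (g := fun x => c3 * f3 x) (continuous_const.mul h3)),
      intervalIntegral.integral_add (i h1) (i (g := fun x => c2 * f2 x) (continuous_const.mul h2))]
  simp only [intervalIntegral.integral_const_mul]

/-- Force/torque balance of the rigid microtubule structure:
`det A = 2π kτ³ Δ > 0`, and the linear system `A (Ẋ_c, ω)ᵀ = B` has the unique
solution given by the explicit formulas for `ω` and `2π Ẋ_c`. -/
theorem stmt11 (kτ : ℝ) (hk : 0 < kτ)
    (r : ℝ → ℝ) (hr : Continuous r) (hnn : ∀ θ, 0 ≤ r θ)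
    (hne : ∃ θ ∈ Set.Icc (0:ℝ) (2*π), r θ ≠ 0)
    (F : ℝ × ℝ) (Xdot : ℝ → ℝ × ℝ) (hX : Continuous Xdot)
    (u : ℝ × ℝ) (s Δ : ℝ)
    (hu : u = ∫ θ in (0:ℝ)..(2*π), r θ • ((-Real.sin θ, Real.cos θ) : ℝ × ℝ))
    (hs : s = ∫ θ in (0:ℝ)..(2*π), (r θ)^2)
    (hΔ : Δ = 2*π*s - dot2 u u) :
    (kτ • (!![2*π, 0, u.1; 0, 2*π, u.2; u.1, u.2, s] : Matrix (Fin 3) (Fin 3) ℝ)).det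
        = 2*π * kτ^3 * Δ ∧
    0 < (kτ • (!![2*π, 0, u.1; 0, 2*π, u.2; u.1, u.2, s] : Matrix (Fin 3) (Fin 3) ℝ)).det ∧
    ∀ (Xcdot : ℝ × ℝ) (ω : ℝ),
      (kτ • ((2*π) • Xcdot + ω • u)
          = kτ • (∫ θ in (0:ℝ)..(2*π), Xdot θ) + F ∧
       kτ * (dot2 u Xcdot + s * ω)
          = kτ * ∫ θ in (0:ℝ)..(2*π),
              r θ * dot2 ((-Real.sin θ, Real.cos θ) : ℝ × ℝ) (Xdot θ))
      ↔ (ω = Δ⁻¹ *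
            (-(dot2 (kτ⁻¹ • F + ∫ θ in (0:ℝ)..(2*π), Xdot θ) u)
              + 2*π * ∫ θ in (0:ℝ)..(2*π),
                  r θ * dot2 ((-Real.sin θ, Real.cos θ) : ℝ × ℝ) (Xdot θ)) ∧
         (2*π) • Xcdot = -ω • u + (∫ θ in (0:ℝ)..(2*π), Xdot θ) + kτ⁻¹ • F) := by
  have hπ : (0:ℝ) < π := Real.pi_pos
  have h2π : (0:ℝ) < 2*π := by positivity
  -- components of u
  have hvcont : Continuous fun θ => r θ • ((-Real.sin θ, Real.cos θ) : ℝ × ℝ) := by fun_prop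
  have hv : IntervalIntegrable (fun θ => r θ • ((-Real.sin θ, Real.cos θ) : ℝ × ℝ)) volume 0 (2*π) :=
    hvcont.intervalIntegrable _ _
  have hu1 : u.1 = ∫ θ in (0:ℝ)..(2*π), r θ * (-Real.sin θ) := by
    rw [hu]
    have h := ContinuousLinearMap.intervalIntegral_comp_comm (ContinuousLinearMap.fst ℝ ℝ ℝ) hv
    simpa [smul_eq_mul] using h.symm
  have hu2 : u.2 = ∫ θ in (0:ℝ)..(2*π), r θ * Real.cos θ := by
    rw [hu]
    have h := ContinuousLinearMap.intervalIntegral_comp_comm (ContinuousLinearMap.snd ℝ ℝ ℝ) hv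
    simpa [smul_eq_mul] using h.symm
  -- s > 0
  have hspos : 0 < s := by
    rw [hs]
    obtain ⟨θ₀, hθ₀, hθne⟩ := hne
    calc (0:ℝ) = ∫ θ in (0:ℝ)..(2*π), (0:ℝ) := by simp
      _ < ∫ θ in (0:ℝ)..(2*π), (r θ)^2 := by
          apply intervalIntegral.integral_lt_integral_of_continuousOn_of_le_of_exists_lt h2π
            continuousOn_const ((hr.pow 2).continuousOn) (fun x _ => sq_nonneg _)
          refine ⟨θ₀, hθ₀, ?_⟩
          have := lt_of_le_of_ne (hnn θ₀) (Ne.symm hθne)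
          exact pow_pos this 2
  -- Cauchy–Schwarz : u.1^2 + u.2^2 ≤ π * s
  have hrs : ∫ θ in (0:ℝ)..(2*π), r θ * Real.sin θ = -u.1 := by
    rw [hu1, ← intervalIntegral.integral_neg]; congr 1; funext θ; ring
  have hsin2 : ∫ θ in (0:ℝ)..(2*π), Real.sin θ^2 = π := by
    rw [integral_sin_sq]; simp
  have hcos2 : ∫ θ in (0:ℝ)..(2*π), Real.cos θ^2 = π := by
    rw [integral_cos_sq]; simp
  have hsc : ∫ θ in (0:ℝ)..(2*π), Real.sin θ * Real.cos θ = 0 := by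
    rw [integral_sin_mul_cos₁]; simp
  have hCS : u.1^2 + u.2^2 ≤ π * s := by
    have h0 : (0:ℝ) ≤ ∫ θ in (0:ℝ)..(2*π),
        (r θ - (-u.1 * Real.sin θ + u.2 * Real.cos θ)/π)^2 :=
      intervalIntegral.integral_nonneg h2π.le (fun x _ => sq_nonneg _)
    have heq : (fun θ => (r θ - (-u.1 * Real.sin θ + u.2 * Real.cos θ)/π)^2)
        = fun θ => (r θ)^2 + (2*u.1/π)*(r θ * Real.sin θ) + (-(2*u.2)/π)*(r θ * Real.cos θ)
          + (u.1^2/π^2)*(Real.sin θ^2) + (u.2^2/π^2)*(Real.cos θ^2)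
          + (-(2*u.1*u.2)/π^2)*(Real.sin θ * Real.cos θ) := by
      funext θ; field_simp; ring
    rw [heq, split6 _ _ _ _ _ _ _ _ _ _ _ (by fun_prop) (by fun_prop) (by fun_prop)
        (by fun_prop) (by fun_prop) (by fun_prop), ← hs, hrs, ← hu2, hsin2, hcos2, hsc] at h0
    have hrewr : s + (2*u.1/π)*(-u.1) + (-(2*u.2)/π)*u.2 + (u.1^2/π^2)*π + (u.2^2/π^2)*π
        + (-(2*u.1*u.2)/π^2)*0 = s - (u.1^2 + u.2^2)/π := by field_simp; ring
    rw [hrewr] at h0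
    have h1 := mul_nonneg hπ.le h0
    have h2 : π*(s - (u.1^2 + u.2^2)/π) = π*s - (u.1^2 + u.2^2) := by field_simp
    linarith [h2 ▸ h1]
  have hΔ' : Δ = 2*π*s - (u.1^2 + u.2^2) := by rw [hΔ]; simp [dot2]; ring
  have hΔpos : 0 < Δ := by rw [hΔ']; nlinarith [hCS, hspos, hπ]
  have hΔne : Δ ≠ 0 := hΔpos.ne'
  have hkne : kτ ≠ 0 := hk.ne'
  have hdet : (kτ • (!![2*π, 0, u.1; 0, 2*π, u.2; u.1, u.2, s] : Matrix (Fin 3) (Fin 3) ℝ)).det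
      = 2*π * kτ^3 * Δ := by
    simp [Matrix.det_fin_three, Matrix.smul_apply, smul_eq_mul, hΔ', ]
    ring
  refine ⟨hdet, by rw [hdet]; positivity, ?_⟩
  intro Xcdot ω
  set I := ∫ θ in (0:ℝ)..(2*π), Xdot θ with hI
  set J := ∫ θ in (0:ℝ)..(2*π),
      r θ * dot2 ((-Real.sin θ, Real.cos θ) : ℝ × ℝ) (Xdot θ) with hJ
  constructor
  · rintro ⟨e1, e2⟩
    have e1a : kτ * (2*π*Xcdot.1 + ω*u.1) = kτ * I.1 + F.1 := by
      have := congrArg Prod.fst e1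
      simpa [Prod.smul_fst, Prod.fst_add, smul_eq_mul, mul_add] using this
    have e1b : kτ * (2*π*Xcdot.2 + ω*u.2) = kτ * I.2 + F.2 := by
      have := congrArg Prod.snd e1
      simpa [Prod.smul_snd, Prod.snd_add, smul_eq_mul, mul_add] using this
    have e2s : kτ * (u.1*Xcdot.1 + u.2*Xcdot.2 + s*ω) = kτ * J := by
      simpa [dot2] using e2
    have hωΔ : ω * Δ = -(dot2 (kτ⁻¹ • F + I) u) + 2*π * J := by
      simp only [dot2, Prod.fst_add, Prod.smul_fst, Prod.snd_add, Prod.smul_snd, smul_eq_mul, hΔ']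
      field_simp
      linear_combination 2*π*e2s - u.1*e1a - u.2*e1b
    constructor
    · rw [← hωΔ]; field_simp
    · have c1 : 2*π*Xcdot.1 = -ω*u.1 + I.1 + kτ⁻¹*F.1 := by
        field_simp; linear_combination e1a
      have c2 : 2*π*Xcdot.2 = -ω*u.2 + I.2 + kτ⁻¹*F.2 := by
        field_simp; linear_combination e1b
      exact Prod.ext (by simpa [smul_eq_mul] using c1) (by simpa [smul_eq_mul] using c2)
  · rintro ⟨hω, hXc⟩
    have c1 : 2*π*Xcdot.1 = -ω*u.1 + I.1 + kτ⁻¹*F.1 := by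
      have := congrArg Prod.fst hXc
      simpa [Prod.smul_fst, Prod.fst_add, smul_eq_mul] using this
    have c2 : 2*π*Xcdot.2 = -ω*u.2 + I.2 + kτ⁻¹*F.2 := by
      have := congrArg Prod.snd hXc
      simpa [Prod.smul_snd, Prod.snd_add, smul_eq_mul] using this
    have hωΔ : ω * Δ = -((kτ⁻¹*F.1 + I.1)*u.1 + (kτ⁻¹*F.2 + I.2)*u.2) + 2*π * J := by
      rw [hω]
      simp only [dot2, Prod.fst_add, Prod.smul_fst, Prod.snd_add, Prod.smul_snd, smul_eq_mul]
      field_simp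
    constructor
    · apply Prod.ext
      · simp only [Prod.smul_fst, Prod.fst_add, smul_eq_mul, Prod.smul_snd]
        field_simp at c1 ⊢
        linear_combination c1
      · simp only [Prod.smul_snd, Prod.snd_add, smul_eq_mul]
        field_simp at c2 ⊢
        linear_combination c2
    · simp only [dot2]
      rw [hΔ'] at hωΔ
      field_simp at c1 c2 hωΔ
      have goal2 : 2*π*(kτ*(u.1*Xcdot.1 + u.2*Xcdot.2 + s*ω)) = 2*π*(kτ*J) := by
        linear_combination u.1*c1 + u.2*c2 + hωΔ
      exact mul_left_cancel₀ h2π.ne' goal2
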